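/- arXiv:2111.10915 — 3 statements merged into one kernel-verified Lean document; each statement's English description precedes it below -/
import Mathlib

section
/- Let M be a real 4d×4d matrix that is symplectic, i.e. Mᵀ J_{4d} M = J_{4d}. Let v, w ∈ ℝ^{4d} satisfy A M v = -A v and A M w = -A w. Then (Mv)ᵀ X (Mw) = vᵀ X w, where X = J_{4d} - Aᵀ J_{2d} A. -/
open Matrix Kronecker

/-- The block matrix `A = [[I, -I, 0, 0], [0, 0, I, -I]]` (2d × 4d). -/
noncomputable def Amat (d : ℕ) : Matrix (Fin 2 × Fin d) (Fin 4 × Fin d) ℝ :=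
  (!![1, -1, 0, 0; 0, 0, 1, -1] : Matrix (Fin 2) (Fin 4) ℝ) ⊗ₖ (1 : Matrix (Fin d) (Fin d) ℝ)

/-- The standard symplectic matrix `J_{2d} = [[0, I],[-I, 0]]` in coordinates (q,p). -/
noncomputable def J2mat (d : ℕ) : Matrix (Fin 2 × Fin d) (Fin 2 × Fin d) ℝ :=
  (!![0, 1; -1, 0] : Matrix (Fin 2) (Fin 2) ℝ) ⊗ₖ (1 : Matrix (Fin d) (Fin d) ℝ)

/-- The symplectic matrix `J_{4d}` in coordinates ordered (q,x,p,y). -/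
noncomputable def J4mat (d : ℕ) : Matrix (Fin 4 × Fin d) (Fin 4 × Fin d) ℝ :=
  (!![0, 0, 1, 0; 0, 0, 0, 1; -1, 0, 0, 0; 0, -1, 0, 0] : Matrix (Fin 4) (Fin 4) ℝ) ⊗ₖ
    (1 : Matrix (Fin d) (Fin d) ℝ)

/-- `X = [[0,0,0,I],[0,0,I,0],[0,-I,0,0],[-I,0,0,0]]` in coordinates (q,x,p,y). -/
noncomputable def Xmat (d : ℕ) : Matrix (Fin 4 × Fin d) (Fin 4 × Fin d) ℝ :=
  (!![0, 0, 0, 1; 0, 0, 1, 0; 0, -1, 0, 0; -1, 0, 0, 0] : Matrix (Fin 4) (Fin 4) ℝ) ⊗ₖ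
    (1 : Matrix (Fin d) (Fin d) ℝ)

/-!
Since `X = J₄ - Aᵀ J₂ A`, the form `vᵀ X w` is the symplectic form `vᵀ J₄ w`, which `M` preserves,
minus `(A v)ᵀ J₂ (A w)`, which is unchanged when both `A v` and `A w` change sign.
-/

theorem Matrix.dotProduct_mulVec_transpose_mul_mul {m n R : Type*} [Fintype m] [Fintype n]
    [CommSemiring R] (A : Matrix m n R) (B : Matrix m m R) (a b : n → R) :
    a ⬝ᵥ (Aᵀ * B * A) *ᵥ b = A *ᵥ a ⬝ᵥ B *ᵥ (A *ᵥ b) := by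
  rw [← mulVec_mulVec, ← mulVec_mulVec, dotProduct_mulVec, vecMul_transpose]

theorem Matrix.dotProduct_mulVec_mulVec_of_transpose_mul_mul_eq {n R : Type*} [Fintype n]
    [CommSemiring R] {M J : Matrix n n R} (hM : Mᵀ * J * M = J) (a b : n → R) :
    M *ᵥ a ⬝ᵥ J *ᵥ (M *ᵥ b) = a ⬝ᵥ J *ᵥ b := by
  rw [← dotProduct_mulVec_transpose_mul_mul, hM]

theorem Xmat_eq_J4mat_sub (d : ℕ) : Xmat d = J4mat d - (Amat d)ᵀ * J2mat d * Amat d := by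
  refine eq_sub_of_add_eq ?_
  rw [Amat, J2mat, Xmat, J4mat, ← kroneckerMap_transpose, transpose_one, ← mul_kronecker_mul,
    ← mul_kronecker_mul, one_mul, one_mul, ← add_kronecker]
  congr 1
  ext i j
  fin_cases i <;> fin_cases j <;> simp [Matrix.mul_apply, Fin.sum_univ_succ]

/-- If `M` is symplectic and `v, w` satisfy `A M v = -A v`, `A M w = -A w`, then
`(Mv)ᵀ X (Mw) = vᵀ X w`, where `X = J_{4d} - Aᵀ J_{2d} A` (see `Xmat`). -/
theorem symplectic_preserves_X (d : ℕ) (M : Matrix (Fin 4 × Fin d) (Fin 4 × Fin d) ℝ)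
    (v w : Fin 4 × Fin d → ℝ)
    (hM : Mᵀ * J4mat d * M = J4mat d)
    (hv : (Amat d).mulVec (M.mulVec v) = -((Amat d).mulVec v))
    (hw : (Amat d).mulVec (M.mulVec w) = -((Amat d).mulVec w)) :
    M.mulVec v ⬝ᵥ (Xmat d).mulVec (M.mulVec w) = v ⬝ᵥ (Xmat d).mulVec w := by
  simp only [Xmat_eq_J4mat_sub, sub_mulVec, dotProduct_sub, dotProduct_mulVec_transpose_mul_mul,
    dotProduct_mulVec_mulVec_of_transpose_mul_mul_eq hM, hv, hw, mulVec_neg, neg_dotProduct,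
    dotProduct_neg, neg_neg]
end

section
/- Let ι : ℝ^{2d} → ℝ^{4d} be the linear map ι(q,p) = (q,q,p,p) and let L : ℝ^{2d} → ℝ^{2d} be any linear map. Set S = ι + Aᵀ L (as a 4d×2d matrix). Then Sᵀ (J_{4d} + X) S = 4 J_{2d}. -/
open Matrix Kronecker

/-- The inclusion `ι(q,p) = (q,q,p,p)` as a 4d × 2d matrix. -/
noncomputable def iotaMat (d : ℕ) : Matrix (Fin 4 × Fin d) (Fin 2 × Fin d) ℝ :=
  (!![1, 0; 1, 0; 0, 1; 0, 1] : Matrix (Fin 4) (Fin 2) ℝ) ⊗ₖ (1 : Matrix (Fin d) (Fin d) ℝ)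
/-! The range of `Aᵀ` is annihilated by `J_{4d} + X` from both sides (`(J_{4d} + X) Aᵀ = 0` and
`A (J_{4d} + X) = 0`), so the correction `Aᵀ L` does not change the form `Sᵀ (J_{4d} + X) S`, which
therefore equals `ιᵀ (J_{4d} + X) ι = 4 J_{2d}`. All matrices involved are Kronecker products of a
small matrix with `I_d`, so these identities reduce to products of 2×4, 4×4 and 4×2 matrices. -/

namespace Matrix

theorem kronecker_one_mul_kronecker_one {l m n p α : Type*} [Fintype m] [Fintype n]
    [DecidableEq n] [CommSemiring α] (A : Matrix l m α) (B : Matrix m p α) :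
    (A ⊗ₖ (1 : Matrix n n α)) * (B ⊗ₖ (1 : Matrix n n α)) = (A * B) ⊗ₖ (1 : Matrix n n α) := by
  rw [← mul_kronecker_mul, one_mul]

theorem transpose_add_mul_mul_add_of_mul_eq_zero {k m n R : Type*} [Fintype k] [Fintype m]
    [CommRing R] (M : Matrix m m R) (P : Matrix m n R) (B : Matrix k m R) (L : Matrix k n R)
    (hMB : M * Bᵀ = 0) (hBM : B * M = 0) :
    (P + Bᵀ * L)ᵀ * M * (P + Bᵀ * L) = Pᵀ * M * P := by
  have hPBM : (P + Bᵀ * L)ᵀ * M = Pᵀ * M := by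
    rw [transpose_add, transpose_mul, transpose_transpose, Matrix.add_mul, Matrix.mul_assoc, hBM,
      Matrix.mul_zero, add_zero]
  rw [hPBM, Matrix.mul_add, ← Matrix.mul_assoc (Pᵀ * M) Bᵀ L, Matrix.mul_assoc Pᵀ M Bᵀ, hMB,
    Matrix.mul_zero, Matrix.zero_mul, add_zero]

end Matrix

theorem J4mat_add_Xmat (d : ℕ) : J4mat d + Xmat d =
    (!![0, 0, 1, 1; 0, 0, 1, 1; -1, -1, 0, 0; -1, -1, 0, 0] : Matrix (Fin 4) (Fin 4) ℝ) ⊗ₖ 1 := by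
  rw [J4mat, Xmat, ← add_kronecker]
  congr 1
  ext i j; fin_cases i <;> fin_cases j <;> norm_num

theorem transpose_Amat (d : ℕ) : (Amat d)ᵀ =
    (!![1, 0; -1, 0; 0, 1; 0, -1] : Matrix (Fin 4) (Fin 2) ℝ) ⊗ₖ 1 := by
  rw [Amat, ← kroneckerMap_transpose, transpose_one]
  congr 1
  ext i j; fin_cases i <;> fin_cases j <;> rfl

theorem transpose_iotaMat (d : ℕ) : (iotaMat d)ᵀ =
    (!![1, 1, 0, 0; 0, 0, 1, 1] : Matrix (Fin 2) (Fin 4) ℝ) ⊗ₖ 1 := by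
  rw [iotaMat, ← kroneckerMap_transpose, transpose_one]
  congr 1
  ext i j; fin_cases i <;> fin_cases j <;> rfl

theorem J4mat_add_Xmat_mul_transpose_Amat (d : ℕ) : (J4mat d + Xmat d) * (Amat d)ᵀ = 0 := by
  rw [J4mat_add_Xmat, transpose_Amat, kronecker_one_mul_kronecker_one]
  convert zero_kronecker _
  ext i j; fin_cases i <;> fin_cases j <;> simp [mul_apply, Fin.sum_univ_four]

theorem Amat_mul_J4mat_add_Xmat (d : ℕ) : Amat d * (J4mat d + Xmat d) = 0 := by
  rw [J4mat_add_Xmat, Amat, kronecker_one_mul_kronecker_one]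
  convert zero_kronecker _
  ext i j; fin_cases i <;> fin_cases j <;> simp [mul_apply, Fin.sum_univ_four]

theorem transpose_iotaMat_mul_J4mat_add_Xmat_mul_iotaMat (d : ℕ) :
    (iotaMat d)ᵀ * (J4mat d + Xmat d) * iotaMat d = (4 : ℝ) • J2mat d := by
  rw [J4mat_add_Xmat, transpose_iotaMat, iotaMat, kronecker_one_mul_kronecker_one,
    kronecker_one_mul_kronecker_one, J2mat, ← smul_kronecker]
  congr 1
  ext i j; fin_cases i <;> fin_cases j <;> simp [mul_apply, Fin.sum_univ_four] <;> norm_num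

/-- For any linear map `L : ℝ^{2d} → ℝ^{2d}` and `S = ι + Aᵀ L`, one has
`Sᵀ (J_{4d} + X) S = 4 J_{2d}`. -/
theorem St_J4_plus_X_S (d : ℕ) (L : Matrix (Fin 2 × Fin d) (Fin 2 × Fin d) ℝ)
    (S : Matrix (Fin 4 × Fin d) (Fin 2 × Fin d) ℝ)
    (hS : S = iotaMat d + (Amat d)ᵀ * L) :
    Sᵀ * (J4mat d + Xmat d) * S = (4 : ℝ) • J2mat d := by
  rw [hS, transpose_add_mul_mul_add_of_mul_eq_zero _ _ _ _ (J4mat_add_Xmat_mul_transpose_Amat d)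
    (Amat_mul_J4mat_add_Xmat d), transpose_iotaMat_mul_J4mat_add_Xmat_mul_iotaMat]
end

section
/- Linearized symplecticity of the semiexplicit method: Let M ∈ ℝ^{4d×4d} be symplectic (Mᵀ J_{4d} M = J_{4d}), let L : ℝ^{2d} → ℝ^{2d} be linear, and set S = ι + Aᵀ L. Assume that for every v ∈ ℝ^{2d}, A M S v = -A S v. Then the 2d×2d matrix T = (1/2) B M S is symplectic: Tᵀ J_{2d} T = J_{2d}. -/
open Matrix Kronecker

/-- The block matrix `B = [[I, I, 0, 0], [0, 0, I, I]]` (2d × 4d). -/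
noncomputable def Bmat (d : ℕ) : Matrix (Fin 2 × Fin d) (Fin 4 × Fin d) ℝ :=
  (!![1, 1, 0, 0; 0, 0, 1, 1] : Matrix (Fin 2) (Fin 4) ℝ) ⊗ₖ (1 : Matrix (Fin d) (Fin d) ℝ)

/-!
Because `Bᵀ J₂ B + Aᵀ J₂ A = 2 J₄`, the form `X ↦ (B X)ᵀ J₂ (B X)` equals
`2 Xᵀ J₄ X - (A X)ᵀ J₂ (A X)`. For `X = M S` the first term is `2 Sᵀ J₄ S` since `M` is
symplectic, and the second does not change when `A M S` is replaced by `-(A S)`. Hence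
`(B M S)ᵀ J₂ (B M S) = (B S)ᵀ J₂ (B S)`, and `B S = B ι + B Aᵀ L = 2 I` gives `Tᵀ J₂ T = J₂`
for `T = ½ B M S`.
-/

namespace Matrix

section Gram

variable {R m n k : Type*} [CommRing R] [Fintype m] [Fintype n]

theorem transpose_mul_mul_eq_sub (Ω : Matrix m m R) (A B : Matrix m n R) (X : Matrix n k R) :
    (B * X)ᵀ * Ω * (B * X) =
      Xᵀ * (Bᵀ * Ω * B + Aᵀ * Ω * A) * X - (A * X)ᵀ * Ω * (A * X) := by
  simp only [transpose_mul, Matrix.mul_add, Matrix.add_mul, Matrix.mul_assoc]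
  abel

theorem transpose_mul_mul_eq_of_mul_eq_neg {J M : Matrix n n R} {Ω : Matrix m m R}
    {A B : Matrix m n R} {S : Matrix n k R} {c : R} (hJ : c • J = Bᵀ * Ω * B + Aᵀ * Ω * A)
    (hM : Mᵀ * J * M = J) (hAMS : A * M * S = -(A * S)) :
    (B * M * S)ᵀ * Ω * (B * M * S) = (B * S)ᵀ * Ω * (B * S) := by
  have hMS : (M * S)ᵀ * (c • J) * (M * S) = Sᵀ * (c • J) * S := by
    rw [Matrix.mul_smul, Matrix.smul_mul, Matrix.mul_smul, Matrix.smul_mul]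
    conv_rhs => rw [← hM]
    simp only [transpose_mul, Matrix.mul_assoc]
  rw [Matrix.mul_assoc B, transpose_mul_mul_eq_sub Ω A B, transpose_mul_mul_eq_sub Ω A B, ← hJ,
    hMS, ← Matrix.mul_assoc A, hAMS]
  simp only [transpose_neg, Matrix.neg_mul, Matrix.mul_neg, neg_neg]

end Gram

section Kronecker

variable {R l m n d : Type*} [CommSemiring R] [Fintype d] [DecidableEq d]

theorem kronecker_one_mul_kronecker_one_s6 [Fintype m] (P : Matrix l m R) (Q : Matrix m n R) :
    (P ⊗ₖ (1 : Matrix d d R)) * (Q ⊗ₖ (1 : Matrix d d R)) =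
      (P * Q) ⊗ₖ (1 : Matrix d d R) := by
  rw [← mul_kronecker_mul, Matrix.one_mul]

omit [Fintype d] in
theorem transpose_kronecker_one (P : Matrix l m R) :
    (P ⊗ₖ (1 : Matrix d d R))ᵀ = Pᵀ ⊗ₖ (1 : Matrix d d R) := by
  rw [← kroneckerMap_transpose, transpose_one]

end Kronecker

end Matrix

theorem two_smul_J4mat (d : ℕ) :
    (2 : ℝ) • J4mat d = (Bmat d)ᵀ * J2mat d * Bmat d + (Amat d)ᵀ * J2mat d * Amat d := by
  simp only [Bmat, Amat, J2mat, J4mat, transpose_kronecker_one, kronecker_one_mul_kronecker_one_s6,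
    ← add_kronecker, ← smul_kronecker]
  congr 1
  ext i j
  fin_cases i <;> fin_cases j <;> norm_num [Matrix.mul_apply, Fin.sum_univ_succ]

theorem Bmat_mul_iotaMat (d : ℕ) : Bmat d * iotaMat d = (2 : ℝ) • 1 := by
  simp only [Bmat, iotaMat, kronecker_one_mul_kronecker_one_s6, ← one_kronecker_one,
    ← smul_kronecker]
  congr 1
  ext i j
  fin_cases i <;> fin_cases j <;> norm_num [Matrix.mul_apply, Fin.sum_univ_succ]

theorem Bmat_mul_transpose_Amat (d : ℕ) : Bmat d * (Amat d)ᵀ = 0 := by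
  simp only [Bmat, Amat, transpose_kronecker_one, kronecker_one_mul_kronecker_one_s6]
  rw [← zero_kronecker (1 : Matrix (Fin d) (Fin d) ℝ)]
  congr 1
  ext i j
  fin_cases i <;> fin_cases j <;> norm_num [Matrix.mul_apply, Fin.sum_univ_succ]

/-- Linearized symplecticity of the semiexplicit method: if `M` is symplectic,
`S = ι + Aᵀ L`, and `A M S v = -A S v` for all `v`, then `T = (1/2) B M S`
is symplectic: `Tᵀ J_{2d} T = J_{2d}`. -/
theorem semiexplicit_linearized_symplectic (d : ℕ)
    (M : Matrix (Fin 4 × Fin d) (Fin 4 × Fin d) ℝ)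
    (L : Matrix (Fin 2 × Fin d) (Fin 2 × Fin d) ℝ)
    (S : Matrix (Fin 4 × Fin d) (Fin 2 × Fin d) ℝ)
    (T : Matrix (Fin 2 × Fin d) (Fin 2 × Fin d) ℝ)
    (hM : Mᵀ * J4mat d * M = J4mat d)
    (hS : S = iotaMat d + (Amat d)ᵀ * L)
    (hAMS : ∀ v : Fin 2 × Fin d → ℝ,
      (Amat d).mulVec (M.mulVec (S.mulVec v)) = -((Amat d).mulVec (S.mulVec v)))
    (hT : T = ((1 : ℝ)/2) • (Bmat d * M * S)) :
    Tᵀ * J2mat d * T = J2mat d := by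
  have hAMS' : Amat d * M * S = -(Amat d * S) := by
    refine ext_iff_mulVec.mpr fun v => ?_
    simpa only [← mulVec_mulVec, neg_mulVec] using hAMS v
  have hBS : Bmat d * S = (2 : ℝ) • 1 := by
    rw [hS, Matrix.mul_add, ← Matrix.mul_assoc, Bmat_mul_transpose_Amat, Matrix.zero_mul,
      add_zero, Bmat_mul_iotaMat]
  rw [hT, transpose_smul, Matrix.smul_mul, Matrix.mul_smul, Matrix.smul_mul,
    transpose_mul_mul_eq_of_mul_eq_neg (two_smul_J4mat d) hM hAMS', hBS]
  simp only [transpose_smul, transpose_one, Matrix.smul_mul, Matrix.mul_smul, Matrix.one_mul,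
    Matrix.mul_one, smul_smul]
  norm_num
end
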